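/- Let U be an open subset of a complex Banach space E, let v be a weight on U, let F be a complex Banach space, and let f ∈ H_v^∞(U,F). Then the v-range (vf)(U) = {v(x)f(x) : x ∈ U} is relatively compact in F if and only if the composition ι_F∘f : U → ℓ∞(B_{F*}) is v-approximable, i.e., ι_F∘f is the limit in the norm ‖·‖_v of a sequence of mappings in H_v^∞(U,ℓ∞(B_{F*})) of finite v-rank. That is, the injective hull of the ideal of v-approximable weighted holomorphic mappings coincides with the ideal of v-compact weighted holomorphic mappings (both carry the norm ‖·‖_v). -/

import Mathlib

open scoped ENNReal
open Set

noncomputable section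

universe u v w

/-- A bundled complex Banach space. -/
structure BanachSp : Type (u + 1) where
  α : Type u
  [grp : NormedAddCommGroup α]
  [mod : NormedSpace ℂ α]
  [cpl : CompleteSpace α]

attribute [instance] BanachSp.grp BanachSp.mod BanachSp.cpl

instance : CoeSort BanachSp (Type u) := ⟨BanachSp.α⟩

section Defs

variable {E : Type u} {F : Type v} [NormedAddCommGroup E] [NormedSpace ℂ E]
  [NormedAddCommGroup F] [NormedSpace ℂ F]

/-- `v` is a weight on `U`: continuous and strictly positive there. -/
def IsWeight (U : Set E) (v : E → ℝ) : Prop :=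
  ContinuousOn v U ∧ ∀ x ∈ U, 0 < v x

/-- `f` belongs to `H_v^∞(U, F)`: holomorphic on `U` with `sup_{x ∈ U} v x * ‖f x‖ < ∞`. -/
def HvBdd (U : Set E) (v : E → ℝ) (f : E → F) : Prop :=
  DifferentiableOn ℂ f U ∧ BddAbove ((fun x => v x * ‖f x‖) '' U)

/-- The weighted supremum norm `‖f‖_v = sup_{x ∈ U} v x * ‖f x‖`. -/
def hvNorm (U : Set E) (v : E → ℝ) (f : E → F) : ℝ :=
  sSup ((fun x => v x * ‖f x‖) '' U)

end Defs

section Iota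

variable (F : Type u) [NormedAddCommGroup F] [NormedSpace ℂ F]

/-- The closed unit ball of the dual space `F*`. -/
def BallDual : Type u := {φ : StrongDual ℂ F // ‖φ‖ ≤ 1}

instance : Nonempty (BallDual F) := ⟨⟨0, by simp⟩⟩

/-- `ℓ∞(B_{F*})`, the space of bounded scalar functions on the closed unit ball of `F*`. -/
abbrev Linf : Type u := lp (fun _ : BallDual F => ℂ) ∞

/-- The canonical embedding `ι_F : F → ℓ∞(B_{F*})`, `⟨ι_F y, φ⟩ = φ y`. -/
def iotaFun (y : F) : Linf F :=
  ⟨fun φ => φ.1 y, memℓp_infty ⟨‖y‖, by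
    rintro r ⟨φ, rfl⟩
    calc ‖φ.1 y‖ ≤ ‖φ.1‖ * ‖y‖ := φ.1.le_opNorm y
      _ ≤ 1 * ‖y‖ := by
          have := φ.2
          exact mul_le_mul_of_nonneg_right this (norm_nonneg y)
      _ = ‖y‖ := one_mul _⟩⟩

/-- The canonical embedding `ι_F : F → ℓ∞(B_{F*})` as a continuous linear map. -/
def iota : F →L[ℂ] Linf F :=
  LinearMap.mkContinuous
    { toFun := iotaFun F
      map_add' := by
        intro y z
        apply lp.ext
        rw [lp.coeFn_add]
        funext φ
        show φ.1 (y + z) = φ.1 y + φ.1 z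
        exact map_add φ.1 y z
      map_smul' := by
        intro c y
        apply lp.ext
        rw [lp.coeFn_smul]
        funext φ
        show φ.1 (c • y) = c • φ.1 y
        exact map_smul φ.1 c y }
    1 (by
      intro y
      rw [one_mul]
      refine lp.norm_le_of_forall_le (norm_nonneg y) fun φ => ?_
      calc ‖φ.1 y‖ ≤ ‖φ.1‖ * ‖y‖ := φ.1.le_opNorm y
        _ ≤ 1 * ‖y‖ := mul_le_mul_of_nonneg_right φ.2 (norm_nonneg y)
        _ = ‖y‖ := one_mul _)

/-- `ℓ∞(B_{F*})` as a bundled Banach space. -/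
def LinfSp : BanachSp.{u} := ⟨Linf F⟩

end Iota

/-- An assignment of a class of weighted holomorphic mappings, together with a
"norm" function, to every component `(U, v, F)`. -/
structure WHAssignment : Type (u + 1) where
  mem : ∀ (E : BanachSp.{u}) (U : Set E) (v : E → ℝ) (F : BanachSp.{u}), (E → F) → Prop
  nrm : ∀ (E : BanachSp.{u}) (U : Set E) (v : E → ℝ) (F : BanachSp.{u}), (E → F) → ℝ

/-- `[I, ‖·‖_I]` is a normed weighted holomorphic ideal. -/
structure IsNormedWHIdeal (I : WHAssignment.{u}) : Prop where
  mem_hv : ∀ (E : BanachSp.{u}) (U : Set E.α) (v : E.α → ℝ), IsOpen U → IsWeight U v →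
    ∀ (F : BanachSp.{u}) (f : E.α → F.α), I.mem E U v F f → HvBdd U v f
  zero_mem : ∀ (E : BanachSp.{u}) (U : Set E.α) (v : E.α → ℝ), IsOpen U → IsWeight U v →
    ∀ (F : BanachSp.{u}), I.mem E U v F (fun _ => 0)
  add_mem : ∀ (E : BanachSp.{u}) (U : Set E.α) (v : E.α → ℝ), IsOpen U → IsWeight U v →
    ∀ (F : BanachSp.{u}) (f g : E.α → F.α), I.mem E U v F f → I.mem E U v F g →
      I.mem E U v F (fun x => f x + g x)
  smul_mem : ∀ (E : BanachSp.{u}) (U : Set E.α) (v : E.α → ℝ), IsOpen U → IsWeight U v →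
    ∀ (F : BanachSp.{u}) (c : ℂ) (f : E.α → F.α), I.mem E U v F f →
      I.mem E U v F (fun x => c • f x)
  nrm_nonneg : ∀ (E : BanachSp.{u}) (U : Set E.α) (v : E.α → ℝ), IsOpen U → IsWeight U v →
    ∀ (F : BanachSp.{u}) (f : E.α → F.α), I.mem E U v F f → 0 ≤ I.nrm E U v F f
  nrm_eq_zero : ∀ (E : BanachSp.{u}) (U : Set E.α) (v : E.α → ℝ), IsOpen U → IsWeight U v →
    ∀ (F : BanachSp.{u}) (f : E.α → F.α), I.mem E U v F f → I.nrm E U v F f = 0 →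
      ∀ x ∈ U, f x = 0
  nrm_add_le : ∀ (E : BanachSp.{u}) (U : Set E.α) (v : E.α → ℝ), IsOpen U → IsWeight U v →
    ∀ (F : BanachSp.{u}) (f g : E.α → F.α), I.mem E U v F f → I.mem E U v F g →
      I.nrm E U v F (fun x => f x + g x) ≤ I.nrm E U v F f + I.nrm E U v F g
  nrm_smul : ∀ (E : BanachSp.{u}) (U : Set E.α) (v : E.α → ℝ), IsOpen U → IsWeight U v →
    ∀ (F : BanachSp.{u}) (c : ℂ) (f : E.α → F.α), I.mem E U v F f →
      I.nrm E U v F (fun x => c • f x) = ‖c‖ * I.nrm E U v F f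
  hv_le_nrm : ∀ (E : BanachSp.{u}) (U : Set E.α) (v : E.α → ℝ), IsOpen U → IsWeight U v →
    ∀ (F : BanachSp.{u}) (f : E.α → F.α), I.mem E U v F f →
      hvNorm U v f ≤ I.nrm E U v F f
  unit_mem : ∀ (E : BanachSp.{u}) (U : Set E.α) (v : E.α → ℝ), IsOpen U → IsWeight U v →
    ∀ (F : BanachSp.{u}) (h : E.α → ℂ), HvBdd U v h → ∀ y : F.α,
      I.mem E U v F (fun x => h x • y) ∧
        I.nrm E U v F (fun x => h x • y) = hvNorm U v h * ‖y‖
  comp_mem : ∀ (E : BanachSp.{u}) (U : Set E.α) (v : E.α → ℝ), IsOpen U → IsWeight U v →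
    ∀ (V : Set E.α), IsOpen V → V ⊆ U →
    ∀ h : E.α → E.α, DifferentiableOn ℂ h V → Set.MapsTo h V U →
    ∀ c : ℝ, 0 ≤ c → (∀ x ∈ V, v x ≤ c * v (h x)) →
    ∀ (F G : BanachSp.{u}) (T : F.α →L[ℂ] G.α) (f : E.α → F.α), I.mem E U v F f →
      I.mem E V v G (fun x => T (f (h x))) ∧
        I.nrm E V v G (fun x => T (f (h x))) ≤ ‖T‖ * I.nrm E U v F f * c

/-- `[I, ‖·‖_I]` is a Banach weighted holomorphic ideal: a normed one with complete components. -/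
structure IsBanachWHIdeal (I : WHAssignment.{u}) extends IsNormedWHIdeal I : Prop where
  complete : ∀ (E : BanachSp.{u}) (U : Set E.α) (v : E.α → ℝ), IsOpen U → IsWeight U v →
    ∀ (F : BanachSp.{u}) (f : ℕ → E.α → F.α), (∀ n, I.mem E U v F (f n)) →
      (∀ ε : ℝ, 0 < ε → ∃ N : ℕ, ∀ m ≥ N, ∀ n ≥ N,
        I.nrm E U v F (fun x => f m x - f n x) < ε) →
      ∃ g : E.α → F.α, I.mem E U v F g ∧
        ∀ ε : ℝ, 0 < ε → ∃ N : ℕ, ∀ n ≥ N, I.nrm E U v F (fun x => f n x - g x) < ε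

/-- Injectivity of a normed weighted holomorphic ideal. -/
def WHInjective (I : WHAssignment.{u}) : Prop :=
  ∀ (E : BanachSp.{u}) (U : Set E.α) (v : E.α → ℝ), IsOpen U → IsWeight U v →
  ∀ (F G : BanachSp.{u}) (f : E.α → F.α), HvBdd U v f →
  ∀ ι : F.α →ₗᵢ[ℂ] G.α, I.mem E U v G (fun x => ι (f x)) →
    I.mem E U v F f ∧ I.nrm E U v F f = I.nrm E U v G (fun x => ι (f x))

/-- The injective hull `[I^inj, ‖·‖_{I^inj}]` of a weighted holomorphic ideal. -/
def whInj (I : WHAssignment.{u}) : WHAssignment.{u} where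
  mem E U v F f := HvBdd U v f ∧ I.mem E U v (LinfSp F.α) (fun x => iota F.α (f x))
  nrm E U v F f := I.nrm E U v (LinfSp F.α) (fun x => iota F.α (f x))

/-- The order relation `[I, ‖·‖_I] ≤ [J, ‖·‖_J]` between weighted holomorphic ideals. -/
def WHle (I J : WHAssignment.{u}) : Prop :=
  ∀ (E : BanachSp.{u}) (U : Set E.α) (v : E.α → ℝ), IsOpen U → IsWeight U v →
  ∀ (F : BanachSp.{u}) (f : E.α → F.α), I.mem E U v F f →
    J.mem E U v F f ∧ J.nrm E U v F f ≤ I.nrm E U v F f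

/-- The domination property: `‖Σ λᵢ v(xᵢ) f(xᵢ)‖ ≤ ‖Σ λᵢ v(xᵢ) g(xᵢ)‖` for all finite families. -/
def Dominates {E : Type u} {F : Type v} {G : Type w} [NormedAddCommGroup E] [NormedSpace ℂ E]
    [NormedAddCommGroup F] [NormedSpace ℂ F] [NormedAddCommGroup G] [NormedSpace ℂ G]
    (U : Set E) (v : E → ℝ) (f : E → F) (g : E → G) : Prop :=
  ∀ (n : ℕ) (lam : Fin n → ℂ) (x : Fin n → E), (∀ i, x i ∈ U) →
    ‖∑ i, lam i • v (x i) • f (x i)‖ ≤ ‖∑ i, lam i • v (x i) • g (x i)‖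



/-- `g` has finite v-rank: its v-range is contained in a finite-dimensional subspace. -/
def FiniteVRank {E : Type u} {F : Type v} [NormedAddCommGroup E] [NormedSpace ℂ E]
    [NormedAddCommGroup F] [NormedSpace ℂ F] (U : Set E) (v : E → ℝ) (g : E → F) : Prop :=
  ∃ W : Submodule ℂ F, FiniteDimensional ℂ W ∧ ∀ x ∈ U, v x • g x ∈ W

/-!
Since `ι_F` is an isometry, `(vf)(U)` is relatively compact iff the `v`-range of `ι_F ∘ f` is
totally bounded in `ℓ∞(B_{F*})`. A `v`-range lying uniformly close to bounded subsets of
finite-dimensional spaces is totally bounded, which gives one direction. Conversely, a totally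
bounded set `S ⊆ ℓ∞(Γ)` is uniformly approximated by the finite-rank operator `z ↦ z ∘ r`, where
`r : Γ → Γ` has finite range: take a finite net `t` of `S` and let `r γ` be a point whose
"coordinates" `(s (r γ))_{s ∈ t}` are close to `(s γ)_{s ∈ t}`, which is possible because these
coordinate vectors form a bounded subset of the finite-dimensional space `t → 𝕜`. Composing
`ι_F ∘ f` with such operators gives the finite `v`-rank approximants.
-/

open Filter Metric Topology

theorem TotallyBounded.exists_finite_range_dist_lt {Γ X : Type*} [PseudoMetricSpace X]
    {Φ : Γ → X} (hΦ : TotallyBounded (range Φ)) {δ : ℝ} (hδ : 0 < δ) :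
    ∃ r : Γ → Γ, (range r).Finite ∧ ∀ γ, dist (Φ γ) (Φ (r γ)) < δ := by
  obtain ⟨t, htΦ, ht, hcover⟩ := finite_approx_of_totallyBounded hΦ δ hδ
  have : Finite t := ht.to_subtype
  choose g hg using fun y : t => htΦ y.2
  choose c hc using fun γ => by simpa using hcover (mem_range_self (f := Φ) γ)
  refine ⟨fun γ => g ⟨c γ, (hc γ).1⟩, (finite_range g).subset ?_, fun γ => ?_⟩
  · rintro _ ⟨γ, rfl⟩
    exact mem_range_self _
  · simpa [hg] using (hc γ).2

theorem isCompact_closure_iff_totallyBounded {α : Type*} [UniformSpace α] [CompleteSpace α]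
    {s : Set α} : IsCompact (closure s) ↔ TotallyBounded s :=
  ⟨fun h => h.totallyBounded.subset subset_closure,
    fun h => h.closure.isCompact_of_isClosed isClosed_closure⟩

theorem totallyBounded_of_forall_exists_dist_lt {α : Type*} [PseudoMetricSpace α] {s : Set α}
    (h : ∀ ε > 0, ∃ t, TotallyBounded t ∧ ∀ x ∈ s, ∃ y ∈ t, dist x y < ε) :
    TotallyBounded s := by
  refine totallyBounded_iff.2 fun ε hε => ?_
  obtain ⟨t, ht, hst⟩ := h (ε / 2) (by positivity)
  obtain ⟨c, hc, hct⟩ := totallyBounded_iff.1 ht (ε / 2) (by positivity)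
  refine ⟨c, hc, fun x hx => ?_⟩
  obtain ⟨y, hy, hxy⟩ := hst x hx
  obtain ⟨z, hz, hyz⟩ := mem_iUnion₂.1 (hct hy)
  exact mem_iUnion₂.2 ⟨z, hz, mem_ball.2 (by linarith [dist_triangle x y z, mem_ball.1 hyz])⟩

theorem totallyBounded_of_isBounded_of_subset_submodule {𝕜 V : Type*} [RCLike 𝕜]
    [NormedAddCommGroup V] [NormedSpace 𝕜 V] {W : Submodule 𝕜 V} [FiniteDimensional 𝕜 W]
    {s : Set V} (hs : Bornology.IsBounded s) (hsW : s ⊆ W) : TotallyBounded s := by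
  have hpre : TotallyBounded ((↑) ⁻¹' s : Set W) :=
    (isometry_subtype_coe.antilipschitz.isBounded_preimage hs).isCompact_closure
      |>.totallyBounded.subset subset_closure
  refine (hpre.image uniformContinuous_subtype_val).subset fun x hx => ?_
  exact ⟨⟨x, hsW hx⟩, hx, rfl⟩

open scoped lp

section LinftyApproximation

variable {𝕜 : Type*} [RCLike 𝕜] {Γ : Type*}

theorem TotallyBounded.exists_finite_range_norm_sub_lt {S : Set ℓ^∞(Γ, 𝕜)}
    (hS : TotallyBounded S) {ε : ℝ} (hε : 0 < ε) :
    ∃ r : Γ → Γ, (range r).Finite ∧ ∀ z ∈ S, ∀ γ, ‖z γ - z (r γ)‖ < ε := by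
  obtain ⟨t, -, ht, hcover⟩ := finite_approx_of_totallyBounded hS (ε / 3) (by positivity)
  have := ht.fintype
  set Φ : Γ → t → 𝕜 := fun γ s => (s : ℓ^∞(Γ, 𝕜)) γ
  have hΦ : TotallyBounded (range Φ) := by
    refine (Bornology.forall_isBounded_image_eval_iff.1 fun s => ?_).isCompact_closure
      |>.totallyBounded.subset subset_closure
    rw [← range_comp]
    exact isBounded_iff_forall_norm_le.2
      ⟨‖(s : ℓ^∞(Γ, 𝕜))‖, forall_mem_range.2 fun γ =>
        lp.norm_apply_le_norm ENNReal.top_ne_zero _ γ⟩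
  obtain ⟨r, hr, hΦr⟩ := hΦ.exists_finite_range_dist_lt (δ := ε / 3) (by positivity)
  refine ⟨r, hr, fun z hz γ => ?_⟩
  obtain ⟨s, hs, hzs⟩ := mem_iUnion₂.1 (hcover hz)
  have hzs_apply : ∀ γ', ‖z γ' - s γ'‖ < ε / 3 := fun γ' =>
    (lp.norm_apply_le_norm ENNReal.top_ne_zero (z - s) γ').trans_lt (by rwa [← dist_eq_norm])
  have hsr : ‖s γ - s (r γ)‖ < ε / 3 := by
    rw [← dist_eq_norm]
    exact (dist_le_pi_dist (Φ γ) (Φ (r γ)) ⟨s, hs⟩).trans_lt (hΦr γ)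
  calc ‖z γ - z (r γ)‖ = ‖(z γ - s γ) + (s γ - s (r γ)) - (z (r γ) - s (r γ))‖ := by
        congr 1; abel
    _ ≤ ‖z γ - s γ‖ + ‖s γ - s (r γ)‖ + ‖z (r γ) - s (r γ)‖ :=
        norm_sub_le_of_le (norm_add_le _ _) le_rfl
    _ < ε / 3 + ε / 3 + ε / 3 := by gcongr <;> apply_rules
    _ = ε := by ring

def finitePullback {ι : Type*} [Finite ι] (c : Γ → ι) : (ι → 𝕜) →ₗ[𝕜] ℓ^∞(Γ, 𝕜) where
  toFun w := ⟨w ∘ c, memℓp_infty <|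
    ((finite_range fun i => ‖w i‖).subset (range_comp_subset_range c _)).bddAbove⟩
  map_add' _ _ := rfl
  map_smul' _ _ := rfl

variable {Δ : Type*}

/-- Precomposition `z ↦ z ∘ r`, factored through `range r → 𝕜` so that its range is visibly
finite-dimensional. -/
def lpPrecomp (r : Γ → Δ) [Finite (range r)] : ℓ^∞(Δ, 𝕜) →L[𝕜] ℓ^∞(Γ, 𝕜) :=
  (LinearMap.toContinuousLinearMap (finitePullback (rangeFactorization r))).comp
    (ContinuousLinearMap.pi fun a : range r => lp.evalCLM 𝕜 (fun _ => 𝕜) ∞ a.1)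

@[simp]
theorem lpPrecomp_apply (r : Γ → Δ) [Finite (range r)] (z : ℓ^∞(Δ, 𝕜)) (γ : Γ) :
    lpPrecomp (𝕜 := 𝕜) r z γ = z (r γ) :=
  rfl

instance (r : Γ → Δ) [Finite (range r)] :
    FiniteDimensional 𝕜 (LinearMap.range (lpPrecomp (𝕜 := 𝕜) r : ℓ^∞(Δ, 𝕜) →ₗ[𝕜] ℓ^∞(Γ, 𝕜))) :=
  Submodule.finiteDimensional_of_le (LinearMap.range_comp_le_range _ _)

theorem TotallyBounded.exists_finiteDimensional_range_norm_sub_le {S : Set ℓ^∞(Γ, 𝕜)}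
    (hS : TotallyBounded S) {ε : ℝ} (hε : 0 < ε) :
    ∃ T : ℓ^∞(Γ, 𝕜) →L[𝕜] ℓ^∞(Γ, 𝕜),
      FiniteDimensional 𝕜 (LinearMap.range (T : ℓ^∞(Γ, 𝕜) →ₗ[𝕜] ℓ^∞(Γ, 𝕜))) ∧
        ∀ z ∈ S, ‖z - T z‖ ≤ ε := by
  obtain ⟨r, hr, hrS⟩ := hS.exists_finite_range_norm_sub_lt hε
  have : Finite (range r) := hr.to_subtype
  exact ⟨lpPrecomp r, inferInstance, fun z hz =>
    lp.norm_le_of_forall_le hε.le fun γ => by simpa using (hrS z hz γ).le⟩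

end LinftyApproximation

section Weighted

variable {E F G : Type*} [NormedAddCommGroup F] {U : Set E} {v : E → ℝ}

theorem hvNorm_nonneg (hv : ∀ x ∈ U, 0 ≤ v x) (f : E → F) : 0 ≤ hvNorm U v f :=
  Real.sSup_nonneg <| forall_mem_image.2 fun x hx => mul_nonneg (hv x hx) (norm_nonneg _)

theorem hvNorm_le {f : E → F} {C : ℝ} (hC : 0 ≤ C) (h : ∀ x ∈ U, v x * ‖f x‖ ≤ C) :
    hvNorm U v f ≤ C :=
  Real.sSup_le (forall_mem_image.2 h) hC

variable [NormedAddCommGroup E] [NormedSpace ℂ E] [NormedSpace ℂ F] [NormedAddCommGroup G]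
  [NormedSpace ℂ G]

theorem HvBdd.le_hvNorm {f : E → F} (hf : HvBdd U v f) {x : E} (hx : x ∈ U) :
    v x * ‖f x‖ ≤ hvNorm U v f :=
  le_csSup hf.2 (mem_image_of_mem _ hx)

theorem HvBdd.clm_comp (hv : ∀ x ∈ U, 0 ≤ v x) (L : F →L[ℂ] G) {f : E → F} (hf : HvBdd U v f) :
    HvBdd U v (fun x => L (f x)) := by
  obtain ⟨M, hM⟩ := hf.2
  refine ⟨L.differentiable.comp_differentiableOn hf.1, ‖L‖ * M, forall_mem_image.2 fun x hx => ?_⟩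
  calc v x * ‖L (f x)‖ ≤ v x * (‖L‖ * ‖f x‖) := by gcongr; exacts [hv x hx, L.le_opNorm _]
    _ = ‖L‖ * (v x * ‖f x‖) := by ring
    _ ≤ ‖L‖ * M := by gcongr; exact hM (mem_image_of_mem _ hx)

theorem HvBdd.sub (hv : ∀ x ∈ U, 0 ≤ v x) {f g : E → F} (hf : HvBdd U v f) (hg : HvBdd U v g) :
    HvBdd U v (fun x => f x - g x) := by
  obtain ⟨M, hM⟩ := hf.2
  obtain ⟨N, hN⟩ := hg.2
  refine ⟨hf.1.sub hg.1, M + N, forall_mem_image.2 fun x hx => ?_⟩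
  calc v x * ‖f x - g x‖ ≤ v x * ‖f x‖ + v x * ‖g x‖ := by
        rw [← mul_add]; gcongr; exacts [hv x hx, norm_sub_le _ _]
    _ ≤ M + N := add_le_add (hM (mem_image_of_mem _ hx)) (hN (mem_image_of_mem _ hx))

theorem finiteVRank_clm_comp (L : F →L[ℂ] G)
    [FiniteDimensional ℂ (LinearMap.range (L : F →ₗ[ℂ] G))] (f : E → F) :
    FiniteVRank U v (fun x => L (f x)) :=
  ⟨_, inferInstance, fun x _ => by
    rw [← L.map_smul_of_tower]; exact LinearMap.mem_range_self (L : F →ₗ[ℂ] G) _⟩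

theorem FiniteVRank.totallyBounded_vrange (hv : ∀ x ∈ U, 0 ≤ v x) {g : E → F}
    (hg : FiniteVRank U v g) (hgb : HvBdd U v g) :
    TotallyBounded ((fun x => v x • g x) '' U) := by
  obtain ⟨W, hW, hgW⟩ := hg
  obtain ⟨M, hM⟩ := hgb.2
  refine totallyBounded_of_isBounded_of_subset_submodule (W := W)
    (isBounded_iff_forall_norm_le.2 ⟨M, forall_mem_image.2 fun x hx => ?_⟩)
    (image_subset_iff.2 hgW)
  rw [norm_smul_of_nonneg (hv x hx)]
  exact hM (mem_image_of_mem _ hx)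

theorem HvBdd.exists_finiteVRank_hvNorm_sub_le {Γ : Type*} (hv : ∀ x ∈ U, 0 ≤ v x)
    {f : E → ℓ^∞(Γ, ℂ)} (hf : HvBdd U v f) (hfK : TotallyBounded ((fun x => v x • f x) '' U))
    {ε : ℝ} (hε : 0 < ε) :
    ∃ g, HvBdd U v g ∧ FiniteVRank U v g ∧ hvNorm U v (fun x => f x - g x) ≤ ε := by
  obtain ⟨T, _, hTK⟩ := hfK.exists_finiteDimensional_range_norm_sub_le hε
  refine ⟨fun x => T (f x), hf.clm_comp hv T, finiteVRank_clm_comp T f,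
    hvNorm_le hε.le fun x hx => ?_⟩
  have := hTK _ (mem_image_of_mem _ hx)
  rwa [T.map_smul_of_tower, ← smul_sub, norm_smul_of_nonneg (hv x hx)] at this

theorem HvBdd.totallyBounded_vrange_of_forall_hvNorm_sub_lt (hv : ∀ x ∈ U, 0 ≤ v x)
    {f : E → F} (hf : HvBdd U v f)
    (happrox : ∀ ε > 0, ∃ g, HvBdd U v g ∧ FiniteVRank U v g ∧
      hvNorm U v (fun x => f x - g x) < ε) :
    TotallyBounded ((fun x => v x • f x) '' U) := by
  refine totallyBounded_of_forall_exists_dist_lt fun ε hε => ?_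
  obtain ⟨g, hg, hgr, hfg⟩ := happrox ε hε
  refine ⟨_, hgr.totallyBounded_vrange hv hg,
    forall_mem_image.2 fun x hx => ⟨_, mem_image_of_mem _ hx, ?_⟩⟩
  rw [dist_eq_norm, ← smul_sub, norm_smul_of_nonneg (hv x hx)]
  exact ((hf.sub hv hg).le_hvNorm hx).trans_lt hfg

theorem HvBdd.totallyBounded_vrange_iff_exists_tendsto {Γ : Type*} (hv : ∀ x ∈ U, 0 ≤ v x)
    {f : E → ℓ^∞(Γ, ℂ)} (hf : HvBdd U v f) :
    TotallyBounded ((fun x => v x • f x) '' U) ↔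
      ∃ h : ℕ → E → ℓ^∞(Γ, ℂ), (∀ n, HvBdd U v (h n) ∧ FiniteVRank U v (h n)) ∧
        Tendsto (fun n => hvNorm U v (fun x => f x - h n x)) atTop (𝓝 0) := by
  constructor
  · intro hfK
    choose h hh hhr hfh using fun n : ℕ =>
      hf.exists_finiteVRank_hvNorm_sub_le hv hfK (Nat.one_div_pos_of_nat (n := n))
    exact ⟨h, fun n => ⟨hh n, hhr n⟩, squeeze_zero (fun n => hvNorm_nonneg hv _) hfh
      tendsto_one_div_add_atTop_nhds_zero_nat⟩
  · rintro ⟨h, hh, hfh⟩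
    refine hf.totallyBounded_vrange_of_forall_hvNorm_sub_lt hv fun ε hε => ?_
    obtain ⟨n, hn⟩ := (hfh.eventually (gt_mem_nhds hε)).exists
    exact ⟨h n, (hh n).1, (hh n).2, hn⟩

end Weighted

section Iota

variable (F : Type*) [NormedAddCommGroup F] [NormedSpace ℂ F]

theorem norm_iota (y : F) : ‖iota F y‖ = ‖y‖ := by
  refine le_antisymm ?_ ?_
  · simpa using (iota F).le_of_opNorm_le (LinearMap.mkContinuous_norm_le _ zero_le_one _) y
  · obtain ⟨φ, hφ, hφy⟩ := exists_dual_vector'' ℂ y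
    calc ‖y‖ = ‖φ y‖ := by simp [hφy]
      _ = ‖iota F y ⟨φ, hφ⟩‖ := rfl
      _ ≤ ‖iota F y‖ := lp.norm_apply_le_norm ENNReal.top_ne_zero _ _

theorem isometry_iota : Isometry (iota F) :=
  AddMonoidHomClass.isometry_of_norm _ (norm_iota F)

end Iota

theorem vcompact_iff_iota_comp_vapproximable_general
    (E : Type u) [NormedAddCommGroup E] [NormedSpace ℂ E]
    (U : Set E) (v : E → ℝ) (hv : IsWeight U v)
    (F : Type u) [NormedAddCommGroup F] [NormedSpace ℂ F] [CompleteSpace F]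
    (f : E → F) (hf : HvBdd U v f) :
    IsCompact (closure ((fun x => v x • f x) '' U)) ↔
      ∃ h : ℕ → E → Linf F,
        (∀ n, HvBdd U v (h n) ∧ FiniteVRank U v (h n)) ∧
        Filter.Tendsto (fun n => hvNorm U v (fun x => iota F (f x) - h n x))
          Filter.atTop (nhds 0) := by
  have hv₀ : ∀ x ∈ U, 0 ≤ v x := fun x hx => (hv.2 x hx).le
  have hvrange : (fun x => v x • iota F (f x)) '' U = iota F '' ((fun x => v x • f x) '' U) := by
    simp only [image_image, ContinuousLinearMap.map_smul_of_tower]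
  rw [isCompact_closure_iff_totallyBounded,
    ← totallyBounded_image_iff (isometry_iota F).isUniformInducing, ← hvrange]
  exact (hf.clm_comp hv₀ (iota F)).totallyBounded_vrange_iff_exists_tendsto hv₀

/-- `(vf)(U)` is relatively compact iff `ι_F ∘ f` is v-approximable, i.e. a
`‖·‖_v`-limit of a sequence of finite v-rank weighted holomorphic mappings into
`ℓ∞(B_{F*})`. -/
theorem vcompact_iff_iota_comp_vapproximable
    (E : Type u) [NormedAddCommGroup E] [NormedSpace ℂ E] [CompleteSpace E]
    (U : Set E) (v : E → ℝ) (hU : IsOpen U) (hv : IsWeight U v)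
    (F : Type u) [NormedAddCommGroup F] [NormedSpace ℂ F] [CompleteSpace F]
    (f : E → F) (hf : HvBdd U v f) :
    IsCompact (closure ((fun x => v x • f x) '' U)) ↔
      ∃ h : ℕ → E → Linf F,
        (∀ n, HvBdd U v (h n) ∧ FiniteVRank U v (h n)) ∧
        Filter.Tendsto (fun n => hvNorm U v (fun x => iota F (f x) - h n x))
          Filter.atTop (nhds 0) :=
  vcompact_iff_iota_comp_vapproximable_general E U v hv F f hf
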